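/- arXiv:1602.08084 — 2 statements merged into one kernel-verified Lean document; each statement's English description precedes it below -/
import Mathlib

section
/- If the perimeter of a nondegenerate triangle is strictly less than 3√3 times w, then its inradius is strictly less than w/2; consequently no triangle with all folds of the same type and width w can have ribbonlength less than 3√3. -/
open Real

/-- If the perimeter of a nondegenerate triangle is strictly less than `3√3·w`,
then its inradius is strictly less than `w/2`; consequently no triangle with all
folds of the same type (which forces `w/2 ≤ r_in`) and ribbon width `w` can have
ribbonlength `p/w` less than `3√3`. -/
theorem perimeter_lt_implies_inradius_lt
    (a b c w : ℝ) (ha : 0 < a) (hb : 0 < b) (hc : 0 < c)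
    (hab : a < b + c) (hbc : b < a + c) (hca : c < a + b) (hw : 0 < w) :
    let p := a + b + c
    let s := p / 2
    let rin := Real.sqrt (s * (s - a) * (s - b) * (s - c)) / s
    (p < 3 * Real.sqrt 3 * w → rin < w / 2) ∧
      (w / 2 ≤ rin → 3 * Real.sqrt 3 ≤ p / w) := by
  intro p s rin
  have hs : 0 < s := by simp only [s, p]; linarith
  have hx : 0 < s - a := by simp only [s, p]; linarith
  have hy : 0 < s - b := by simp only [s, p]; linarith
  have hz : 0 < s - c := by simp only [s, p]; linarith
  have h3 : (0:ℝ) < Real.sqrt 3 := Real.sqrt_pos.mpr (by norm_num)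
  have h3sq : Real.sqrt 3 ^ 2 = 3 := Real.sq_sqrt (by norm_num)
  -- AM-GM
  have hamgm : 27 * ((s - a) * (s - b) * (s - c)) ≤ s ^ 3 := by
    have hgen : ∀ x y z : ℝ, 0 < x → 0 < y → 0 < z →
        27 * (x * y * z) ≤ (x + y + z) ^ 3 := by
      intro x y z hx hy hz
      nlinarith [mul_nonneg hx.le (sq_nonneg (y - z)),
        mul_nonneg hy.le (sq_nonneg (x - z)),
        mul_nonneg hz.le (sq_nonneg (x - y)),
        mul_nonneg (by linarith : (0:ℝ) ≤ x + y + z) (sq_nonneg (x - y)),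
        mul_nonneg (by linarith : (0:ℝ) ≤ x + y + z) (sq_nonneg (y - z)),
        mul_nonneg (by linarith : (0:ℝ) ≤ x + y + z) (sq_nonneg (x - z))]
    have hsum : (s - a) + (s - b) + (s - c) = s := by simp only [s, p]; ring
    calc 27 * ((s - a) * (s - b) * (s - c))
        ≤ ((s - a) + (s - b) + (s - c)) ^ 3 := hgen _ _ _ hx hy hz
      _ = s ^ 3 := by rw [hsum]
  -- key bound: rin ≤ s / (3 * √3)
  have hkey : rin ≤ s / (3 * Real.sqrt 3) := by
    have hbound : Real.sqrt (s * (s - a) * (s - b) * (s - c)) ≤ s ^ 2 / (3 * Real.sqrt 3) := by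
      have h1 : s * (s - a) * (s - b) * (s - c) ≤ (s ^ 2 / (3 * Real.sqrt 3)) ^ 2 := by
        have : (s ^ 2 / (3 * Real.sqrt 3)) ^ 2 = s ^ 4 / 27 := by
          field_simp
          nlinarith [h3sq]
        rw [this]
        nlinarith [mul_le_mul_of_nonneg_left hamgm hs.le, hs]
      calc Real.sqrt (s * (s - a) * (s - b) * (s - c))
          ≤ Real.sqrt ((s ^ 2 / (3 * Real.sqrt 3)) ^ 2) := Real.sqrt_le_sqrt h1
        _ = s ^ 2 / (3 * Real.sqrt 3) := Real.sqrt_sq (by positivity)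
    have : rin = Real.sqrt (s * (s - a) * (s - b) * (s - c)) / s := rfl
    rw [this, div_le_div_iff₀ hs (by positivity)] at *
    calc Real.sqrt (s * (s - a) * (s - b) * (s - c)) * (3 * Real.sqrt 3)
        ≤ (s ^ 2 / (3 * Real.sqrt 3)) * (3 * Real.sqrt 3) := by
          exact mul_le_mul_of_nonneg_right hbound (by positivity)
      _ = s ^ 2 := by field_simp
      _ = s * s := sq s
  have hp2s : p = 2 * s := by simp only [s]; ring
  constructor
  · intro hplt
    have : s / (3 * Real.sqrt 3) < w / 2 := by
      rw [div_lt_div_iff₀ (by positivity) (by norm_num)]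
      nlinarith [hplt]
    linarith [hkey]
  · intro hwr
    have hsw : 3 * Real.sqrt 3 * w ≤ p := by
      have : w / 2 ≤ s / (3 * Real.sqrt 3) := le_trans hwr hkey
      rw [div_le_div_iff₀ (by norm_num) (by positivity)] at this
      nlinarith
    rw [le_div_iff₀ hw]
    linarith
end

section
/- The minimum value of p/w over all nondegenerate triangles with perimeter p and all widths w > 0 satisfying w/2 ≤ r_in (where r_in is the inradius) equals 3√3, and this minimum is attained exactly when the triangle is equilateral and w = 2·r_in. -/
open Real

private lemma amgm3 (x y z : ℝ) (hx : 0 < x) (hy : 0 < y) (hz : 0 < z) :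
    27 * (x * y * z) ≤ (x + y + z) ^ 3 := by
  nlinarith [sq_nonneg (x-y), sq_nonneg (y-z), sq_nonneg (x-z), mul_pos hx hy,
    mul_pos hy hz, mul_pos hx hz]

private lemma amgm3_eq (x y z : ℝ) (hx : 0 < x) (hy : 0 < y) (hz : 0 < z)
    (h : (x + y + z) ^ 3 ≤ 27 * (x * y * z)) : x = y ∧ y = z := by
  have h1 : z*(x-y)^2 = 0 := by
    nlinarith [mul_nonneg hx.le (sq_nonneg (y-z)), mul_nonneg hy.le (sq_nonneg (z-x)),
      mul_nonneg hz.le (sq_nonneg (x-y)),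
      mul_nonneg (by linarith : (0:ℝ) ≤ x+y+z)
        (by positivity : (0:ℝ) ≤ (x-y)^2+(y-z)^2+(z-x)^2)]
  have h2 : x*(y-z)^2 = 0 := by
    nlinarith [mul_nonneg hx.le (sq_nonneg (y-z)), mul_nonneg hy.le (sq_nonneg (z-x)),
      mul_nonneg hz.le (sq_nonneg (x-y)),
      mul_nonneg (by linarith : (0:ℝ) ≤ x+y+z)
        (by positivity : (0:ℝ) ≤ (x-y)^2+(y-z)^2+(z-x)^2)]
  have e1 : x = y := by
    have := (mul_eq_zero.mp h1).resolve_left (ne_of_gt hz)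
    have := pow_eq_zero_iff (n := 2) (by norm_num) |>.mp this
    linarith
  have e2 : y = z := by
    have := (mul_eq_zero.mp h2).resolve_left (ne_of_gt hx)
    have := pow_eq_zero_iff (n := 2) (by norm_num) |>.mp this
    linarith
  exact ⟨e1, e2⟩

private lemma sqrt_le_aux (x y z : ℝ) (hx : 0 < x) (hy : 0 < y) (hz : 0 < z) :
    Real.sqrt ((x + y + z) * x * y * z) ≤ Real.sqrt 3 * (x + y + z) ^ 2 / 9 := by
  have h3 : Real.sqrt 3 ^ 2 = 3 := Real.sq_sqrt (by norm_num)
  have ht : (0:ℝ) ≤ Real.sqrt 3 * (x + y + z) ^ 2 / 9 := by positivity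
  have hrw : (Real.sqrt 3 * (x + y + z) ^ 2 / 9) ^ 2 = (x + y + z) ^ 4 / 27 := by
    rw [div_pow, mul_pow, h3]; ring
  calc Real.sqrt ((x + y + z) * x * y * z)
      ≤ Real.sqrt ((Real.sqrt 3 * (x + y + z) ^ 2 / 9) ^ 2) := by
        apply Real.sqrt_le_sqrt
        rw [hrw]
        have := amgm3 x y z hx hy hz
        nlinarith [mul_le_mul_of_nonneg_left this (by linarith : (0:ℝ) ≤ x + y + z)]
    _ = _ := Real.sqrt_sq ht

private lemma sqrt_ge_aux (x y z : ℝ) (hx : 0 < x) (hy : 0 < y) (hz : 0 < z)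
    (h : Real.sqrt 3 * (x + y + z) ^ 2 / 9 ≤ Real.sqrt ((x + y + z) * x * y * z)) :
    x = y ∧ y = z := by
  have h3 : Real.sqrt 3 ^ 2 = 3 := Real.sq_sqrt (by norm_num)
  have ht : (0:ℝ) ≤ Real.sqrt 3 * (x + y + z) ^ 2 / 9 := by positivity
  have hu : (0:ℝ) ≤ (x + y + z) * x * y * z := by positivity
  have hsq : (Real.sqrt 3 * (x + y + z) ^ 2 / 9) ^ 2 ≤ (x + y + z) * x * y * z := by
    have := pow_le_pow_left₀ ht h 2
    rwa [Real.sq_sqrt hu] at this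
  have hrw : (Real.sqrt 3 * (x + y + z) ^ 2 / 9) ^ 2 = (x + y + z) ^ 4 / 27 := by
    rw [div_pow, mul_pow, h3]; ring
  rw [hrw] at hsq
  apply amgm3_eq x y z hx hy hz
  have hs : (0:ℝ) < x + y + z := by linarith
  have : (x + y + z) ^ 3 * (x + y + z) ≤ 27 * (x * y * z) * (x + y + z) := by nlinarith
  exact le_of_mul_le_mul_right this hs

private lemma inr_equilateral (a : ℝ) (ha : 0 < a) :
    Real.sqrt (((a+a+a)/2) * ((a+a+a)/2-a) * ((a+a+a)/2-a) * ((a+a+a)/2-a)) / ((a+a+a)/2)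
      = Real.sqrt 3 * a / 6 := by
  have h1 : ((a+a+a)/2) * ((a+a+a)/2-a) * ((a+a+a)/2-a) * ((a+a+a)/2-a)
      = (Real.sqrt 3 * a^2 / 4)^2 := by
    rw [div_pow, mul_pow, Real.sq_sqrt (by norm_num : (0:ℝ) ≤ 3)]; ring
  rw [h1, Real.sqrt_sq (by positivity)]
  field_simp
  ring

/-- The minimum of the ribbonlength `p/w` over all nondegenerate triangles with
perimeter `p` and widths `w > 0` satisfying `w/2 ≤ r_in` equals `3√3`, attained
exactly when the triangle is equilateral and `w = 2·r_in`. -/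
theorem min_ribbonlength_three_stick_unknot
    (inr : ℝ → ℝ → ℝ → ℝ)
    (hinr : ∀ a b c : ℝ, inr a b c =
      Real.sqrt (((a + b + c) / 2) * ((a + b + c) / 2 - a) *
        ((a + b + c) / 2 - b) * ((a + b + c) / 2 - c)) / ((a + b + c) / 2)) :
    IsLeast {x : ℝ | ∃ a b c w : ℝ, 0 < a ∧ 0 < b ∧ 0 < c ∧
        a < b + c ∧ b < a + c ∧ c < a + b ∧ 0 < w ∧ w / 2 ≤ inr a b c ∧
        x = (a + b + c) / w} (3 * Real.sqrt 3) ∧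
      (∀ a b c w : ℝ, 0 < a → 0 < b → 0 < c →
        a < b + c → b < a + c → c < a + b → 0 < w → w / 2 ≤ inr a b c →
        ((a + b + c) / w = 3 * Real.sqrt 3 ↔
          a = b ∧ b = c ∧ w = 2 * inr a b c)) := by
  have h3pos : (0:ℝ) < Real.sqrt 3 := Real.sqrt_pos.mpr (by norm_num)
  have hsq3 : Real.sqrt 3 ^ 2 = 3 := Real.sq_sqrt (by norm_num)
  -- general upper bound for the inradius
  have hbound : ∀ a b c : ℝ, 0 < a → 0 < b → 0 < c →
      a < b + c → b < a + c → c < a + b →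
      inr a b c ≤ Real.sqrt 3 * (a + b + c) / 18 := by
    intro a b c ha hb hc h1 h2 h3
    set X := (-a + b + c) / 2 with hX
    set Y := (a - b + c) / 2 with hY
    set Z := (a + b - c) / 2 with hZ
    have hXp : 0 < X := by rw [hX]; linarith
    have hYp : 0 < Y := by rw [hY]; linarith
    have hZp : 0 < Z := by rw [hZ]; linarith
    have hform : inr a b c = Real.sqrt ((X + Y + Z) * X * Y * Z) / (X + Y + Z) := by
      rw [hinr]
      rw [show ((a + b + c) / 2) * ((a + b + c) / 2 - a) * ((a + b + c) / 2 - b) *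
          ((a + b + c) / 2 - c) = (X + Y + Z) * X * Y * Z by rw [hX, hY, hZ]; ring,
        show (a + b + c) / 2 = X + Y + Z by rw [hX, hY, hZ]; ring]
    have hs : 0 < X + Y + Z := by linarith
    have hle := sqrt_le_aux X Y Z hXp hYp hZp
    rw [hform]
    rw [div_le_iff₀ hs]
    calc Real.sqrt ((X + Y + Z) * X * Y * Z)
        ≤ Real.sqrt 3 * (X + Y + Z) ^ 2 / 9 := hle
      _ = Real.sqrt 3 * (a + b + c) / 18 * (X + Y + Z) := by
          rw [show (a + b + c) = 2 * (X + Y + Z) by rw [hX, hY, hZ]; ring]; ring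
  constructor
  · constructor
    · -- membership : equilateral with a = b = c = 1, w = √3/3
      refine ⟨1, 1, 1, Real.sqrt 3 / 3, by norm_num, by norm_num, by norm_num,
        by norm_num, by norm_num, by norm_num, by positivity, ?_, ?_⟩
      · rw [hinr, show ((1:ℝ) + 1 + 1) = 1 + 1 + 1 by norm_num,
          inr_equilateral 1 (by norm_num)]
        norm_num
        linarith
      · rw [eq_div_iff (by positivity : Real.sqrt 3 / 3 ≠ 0)]
        nlinarith [hsq3]
    · -- lower bound
      rintro x ⟨a, b, c, w, ha, hb, hc, h1, h2, h3, hw, hwr, rfl⟩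
      have hrle := hbound a b c ha hb hc h1 h2 h3
      rw [le_div_iff₀ hw]
      have hwle : w ≤ Real.sqrt 3 * (a + b + c) / 9 := by linarith
      nlinarith [hsq3, mul_le_mul_of_nonneg_left hwle
        (by positivity : (0:ℝ) ≤ 3 * Real.sqrt 3)]
  · intro a b c w ha hb hc h1 h2 h3 hw hwr
    constructor
    · intro heq
      have hp : a + b + c = 3 * Real.sqrt 3 * w := by
        field_simp at heq; linarith
      have hrle := hbound a b c ha hb hc h1 h2 h3
      -- equalities must hold throughout
      have hwle : w ≤ 2 * inr a b c := by linarith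
      have hchain : 3 * Real.sqrt 3 * w ≤ 3 * Real.sqrt 3 * (2 * inr a b c) :=
        mul_le_mul_of_nonneg_left hwle (by positivity)
      have hchain2 : 3 * Real.sqrt 3 * (2 * inr a b c) ≤ a + b + c := by
        nlinarith [hsq3, mul_le_mul_of_nonneg_left hrle
          (by positivity : (0:ℝ) ≤ 6 * Real.sqrt 3)]
      have hweq : w = 2 * inr a b c := by
        have : 3 * Real.sqrt 3 * w = 3 * Real.sqrt 3 * (2 * inr a b c) := by linarith
        exact mul_left_cancel₀ (by positivity) this
      have hreq : Real.sqrt 3 * (a + b + c) / 18 ≤ inr a b c := by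
        have h6 : 3 * Real.sqrt 3 * (2 * inr a b c) = a + b + c := by linarith
        have : Real.sqrt 3 * (a + b + c) = Real.sqrt 3 * (6 * Real.sqrt 3 * inr a b c) := by
          rw [← h6]; ring
        nlinarith [hsq3]
      -- extract equality case
      set X := (-a + b + c) / 2 with hX
      set Y := (a - b + c) / 2 with hY
      set Z := (a + b - c) / 2 with hZ
      have hXp : 0 < X := by rw [hX]; linarith
      have hYp : 0 < Y := by rw [hY]; linarith
      have hZp : 0 < Z := by rw [hZ]; linarith
      have hs : 0 < X + Y + Z := by linarith
      have hform : inr a b c = Real.sqrt ((X + Y + Z) * X * Y * Z) / (X + Y + Z) := by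
        rw [hinr]
        rw [show ((a + b + c) / 2) * ((a + b + c) / 2 - a) * ((a + b + c) / 2 - b) *
            ((a + b + c) / 2 - c) = (X + Y + Z) * X * Y * Z by rw [hX, hY, hZ]; ring,
          show (a + b + c) / 2 = X + Y + Z by rw [hX, hY, hZ]; ring]
      have hge : Real.sqrt 3 * (X + Y + Z) ^ 2 / 9 ≤ Real.sqrt ((X + Y + Z) * X * Y * Z) := by
        have habc : a + b + c = 2 * (X + Y + Z) := by rw [hX, hY, hZ]; ring
        rw [hform] at hreq
        rw [habc] at hreq
        rw [le_div_iff₀ hs] at hreq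
        calc Real.sqrt 3 * (X + Y + Z) ^ 2 / 9
            = Real.sqrt 3 * (2 * (X + Y + Z)) / 18 * (X + Y + Z) := by ring
          _ ≤ _ := hreq
      obtain ⟨e1, e2⟩ := sqrt_ge_aux X Y Z hXp hYp hZp hge
      refine ⟨?_, ?_, hweq⟩
      · rw [hX, hY] at e1; linarith
      · rw [hY, hZ] at e2; linarith
    · rintro ⟨rfl, rfl, rfl⟩
      have hval : inr a a a = Real.sqrt 3 * a / 6 := by
        rw [hinr, inr_equilateral a ha]
      rw [hval]
      rw [div_eq_iff (by positivity : 2 * (Real.sqrt 3 * a / 6) ≠ 0)]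
      nlinarith [hsq3]
end
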